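/- arXiv:2603.24105 — 2 statements merged into one kernel-verified Lean document; each statement's English description precedes it below -/
import Mathlib

section
/- Let U : Ω → 𝒰 and W, W' : Ω → 𝒲 be random variables into standard Borel spaces such that W and W' are identically distributed and U, W, W' are mutually independent. Let q : 𝒰 × 𝒲 → 𝒵 and f : 𝒵 → ℝ^d be measurable functions with f(q(U, W)) square-integrable. If E[‖f(q(U, W)) − f(q(U, W'))‖²] = 0, then there exists a measurable function h : 𝒰 → ℝ^d such that f(q(U, W)) = h(U) almost surely. In particular, writing W = (L, V_L, ε_L) for the aggregated layer index, layer-specific latent factor, and noise of the latent-factor model Z_L = q_L(U, V_L, ε_L), at any global minimum of the matching loss the common embedding C_L = f_C(Z_L) is almost surely a measurable function of the shared latent factor U alone. -/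
/-!
Since the integrand is nonnegative and integrable, `f(q(U,W)) = f(q(U,W'))` almost surely.
By independence, the law of `(U, W, W')` is `μ_U ⊗ ν ⊗ ν`, so by Fubini, for `μ_U`-a.e. `u`
the map `w ↦ f(q(u,w))` agrees with itself at `ν ⊗ ν`-a.e. pair of points, hence is
`ν`-a.e. equal to its mean `h u := ∫ f(q(u,w)) dν(w)`; this `h` is measurable by Fubini.
-/

open MeasureTheory ProbabilityTheory

theorem ae_eq_of_integral_norm_sub_sq_eq_zero {Ω E : Type*} [MeasurableSpace Ω] {μ : Measure Ω}
    [NormedAddCommGroup E] {X Y : Ω → E} (hX : MemLp X 2 μ) (hY : MemLp Y 2 μ)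
    (h : ∫ ω, ‖X ω - Y ω‖ ^ 2 ∂μ = 0) : X =ᵐ[μ] Y := by
  have hXY : MemLp (X - Y) 2 μ := hX.sub hY
  have hint : Integrable (fun ω => ‖X ω - Y ω‖ ^ 2) μ :=
    (memLp_two_iff_integrable_sq_norm hXY.aestronglyMeasurable).1 hXY
  filter_upwards [(integral_eq_zero_iff_of_nonneg (fun _ => by positivity) hint).1 h] with ω hω
  simpa [sub_eq_zero] using hω

theorem ae_eq_integral_of_ae_ae_eq {β E : Type*} [MeasurableSpace β] {ν : Measure β}
    [IsProbabilityMeasure ν] [NormedAddCommGroup E] [NormedSpace ℝ E] [CompleteSpace E] {φ : β → E}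
    (h : ∀ᵐ w ∂ν, ∀ᵐ w' ∂ν, φ w = φ w') : ∀ᵐ w ∂ν, φ w = ∫ w', φ w' ∂ν := by
  filter_upwards [h] with w hw
  rw [integral_congr_ae (hw.mono fun _ => Eq.symm), integral_const, probReal_univ, one_smul]

theorem ae_eq_integral_right_of_ae_eq_prod_self {α β E : Type*} [MeasurableSpace α]
    [MeasurableSpace β] [NormedAddCommGroup E] [NormedSpace ℝ E] [CompleteSpace E] [MeasurableSpace E]
    [BorelSpace E] [SecondCountableTopology E] {μ : Measure α} [SFinite μ] {ν : Measure β}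
    [IsProbabilityMeasure ν] {g : α × β → E} (hg : Measurable g)
    (h : ∀ᵐ p ∂μ.prod (ν.prod ν), g (p.1, p.2.1) = g (p.1, p.2.2)) :
    ∀ᵐ p ∂μ.prod ν, g p = ∫ w, g (p.1, w) ∂ν := by
  have hmeas : Measurable fun u => ∫ w, g (u, w) ∂ν :=
    hg.stronglyMeasurable.integral_prod_right'.measurable
  refine (Measure.ae_prod_iff_ae_ae (p := fun p => g p = ∫ w, g (p.1, w) ∂ν)
    (measurableSet_eq_fun hg (hmeas.comp measurable_fst))).2 ?_
  filter_upwards [Measure.ae_ae_of_ae_prod h] with u hu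
  exact ae_eq_integral_of_ae_ae_eq (Measure.ae_ae_of_ae_prod hu)

theorem exists_ae_eq_comp_of_ae_eq_of_indep_copy {Ω 𝒰 𝒲 E : Type*} [MeasurableSpace Ω]
    {μ : Measure Ω} [IsProbabilityMeasure μ] [MeasurableSpace 𝒰] [MeasurableSpace 𝒲]
    [NormedAddCommGroup E] [NormedSpace ℝ E] [CompleteSpace E] [MeasurableSpace E]
    [BorelSpace E] [SecondCountableTopology E] {U : Ω → 𝒰} {W W' : Ω → 𝒲}
    (hU : Measurable U) (hW : Measurable W) (hW' : Measurable W') (hid : μ.map W = μ.map W')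
    (hWW' : IndepFun W W' μ) (hU_WW' : IndepFun U (fun ω => (W ω, W' ω)) μ)
    {g : 𝒰 × 𝒲 → E} (hg : Measurable g)
    (hae : (fun ω => g (U ω, W ω)) =ᵐ[μ] fun ω => g (U ω, W' ω)) :
    ∃ h : 𝒰 → E, Measurable h ∧ (fun ω => g (U ω, W ω)) =ᵐ[μ] fun ω => h (U ω) := by
  set ν := μ.map W
  have : IsProbabilityMeasure ν := Measure.isProbabilityMeasure_map hW.aemeasurable
  have hlaw : μ.map (fun ω => (U ω, W ω, W' ω)) = (μ.map U).prod (ν.prod ν) := by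
    rw [hU_WW'.map_prod_eq_prod_map_map hU.aemeasurable (hW.prodMk hW').aemeasurable,
      hWW'.map_prod_eq_prod_map_map hW.aemeasurable hW'.aemeasurable, ← hid]
  have hlawUW : μ.map (fun ω => (U ω, W ω)) = (μ.map U).prod ν :=
    (hU_WW'.comp measurable_id measurable_fst).map_prod_eq_prod_map_map hU.aemeasurable
      hW.aemeasurable
  have hdiag : ∀ᵐ p ∂(μ.map U).prod (ν.prod ν), g (p.1, p.2.1) = g (p.1, p.2.2) := by
    rw [← hlaw, ae_map_iff (hU.prodMk (hW.prodMk hW')).aemeasurable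
      (measurableSet_eq_fun (by fun_prop) (by fun_prop))]
    exact hae
  refine ⟨fun u => ∫ w, g (u, w) ∂ν, hg.stronglyMeasurable.integral_prod_right'.measurable, ?_⟩
  have hmean := ae_eq_integral_right_of_ae_eq_prod_self hg hdiag
  rw [← hlawUW] at hmean
  exact ae_of_ae_map (hU.prodMk hW).aemeasurable hmean

theorem stmt7_general {Ω : Type*} [MeasurableSpace Ω] (μ : Measure Ω)
    [IsProbabilityMeasure μ]
    {𝒰 𝒲 𝒵 : Type*}
    [MeasurableSpace 𝒰]
    [MeasurableSpace 𝒲]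
    [MeasurableSpace 𝒵] {d : ℕ}
    (U : Ω → 𝒰) (W W' : Ω → 𝒲)
    (hU : Measurable U) (hW : Measurable W) (hW' : Measurable W')
    -- W and W' are identically distributed
    (hid : Measure.map W μ = Measure.map W' μ)
    -- U, W, W' are mutually independent
    (hWW' : IndepFun W W' μ)
    (hU_WW' : IndepFun U (fun ω => (W ω, W' ω)) μ)
    (q : 𝒰 × 𝒲 → 𝒵) (hq : Measurable q)
    (f : 𝒵 → EuclideanSpace ℝ (Fin d)) (hf : Measurable f)
    (hL2 : MemLp (fun ω => f (q (U ω, W ω))) 2 μ)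
    (hzero : ∫ ω, ‖f (q (U ω, W ω)) - f (q (U ω, W' ω))‖ ^ 2 ∂μ = 0) :
    ∃ h : 𝒰 → EuclideanSpace ℝ (Fin d), Measurable h ∧
      (fun ω => f (q (U ω, W ω))) =ᵐ[μ] fun ω => h (U ω) := by
  have hY : MemLp (fun ω => f (q (U ω, W' ω))) 2 μ := by
    have hUW : IdentDistrib (fun ω => (U ω, W ω)) (fun ω => (U ω, W' ω)) μ μ :=
      (IdentDistrib.refl hU.aemeasurable).prodMk ⟨hW.aemeasurable, hW'.aemeasurable, hid⟩
        (hU_WW'.comp measurable_id measurable_fst) (hU_WW'.comp measurable_id measurable_snd)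
    exact (hUW.comp (hf.comp hq)).memLp_snd hL2
  exact exists_ae_eq_comp_of_ae_eq_of_indep_copy hU hW hW' hid hWW' hU_WW' (hf.comp hq)
    (ae_eq_of_integral_norm_sub_sq_eq_zero hL2 hY hzero)

/-- If `W, W'` are identically distributed, `U, W, W'` are mutually independent,
`f(q(U,W))` is square-integrable, and `E[‖f(q(U,W)) − f(q(U,W'))‖²] = 0`, then
`f(q(U,W)) = h(U)` almost surely for some measurable `h`. -/
theorem stmt7 {Ω : Type*} [MeasurableSpace Ω] (μ : Measure Ω)
    [IsProbabilityMeasure μ]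
    {𝒰 𝒲 𝒵 : Type*}
    [MeasurableSpace 𝒰] [StandardBorelSpace 𝒰]
    [MeasurableSpace 𝒲] [StandardBorelSpace 𝒲]
    [MeasurableSpace 𝒵] {d : ℕ}
    (U : Ω → 𝒰) (W W' : Ω → 𝒲)
    (hU : Measurable U) (hW : Measurable W) (hW' : Measurable W')
    -- W and W' are identically distributed
    (hid : Measure.map W μ = Measure.map W' μ)
    -- U, W, W' are mutually independent
    (hWW' : IndepFun W W' μ)
    (hU_WW' : IndepFun U (fun ω => (W ω, W' ω)) μ)
    (q : 𝒰 × 𝒲 → 𝒵) (hq : Measurable q)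
    (f : 𝒵 → EuclideanSpace ℝ (Fin d)) (hf : Measurable f)
    (hL2 : MemLp (fun ω => f (q (U ω, W ω))) 2 μ)
    (hzero : ∫ ω, ‖f (q (U ω, W ω)) - f (q (U ω, W' ω))‖ ^ 2 ∂μ = 0) :
    ∃ h : 𝒰 → EuclideanSpace ℝ (Fin d), Measurable h ∧
      (fun ω => f (q (U ω, W ω))) =ᵐ[μ] fun ω => h (U ω) :=
  stmt7_general μ U W W' hU hW hW' hid hWW' hU_WW' q hq f hf hL2 hzero
end

section
/- Let L and Z be random variables taking values in finite sets, let f_P be a function on the range of Z, and set P* = f_P(Z). (i) If H(L | P*) = H(L | Z)—i.e., the encoder f_P attains the infimum of H(L | f(Z)) over all functions f, which equals H(L | Z)—then I(L; Z | P*) = 0 and L and Z are conditionally independent given P*, so P* is a sufficient statistic for L with respect to Z. (ii) If, in addition, P* is minimal sufficient in the sense that the σ-algebra σ(P*) generated by P* is contained in any other sufficient σ-algebra, and V is a random variable taking values in a standard Borel space for which σ(V) is sufficient for L (i.e., L and Z are conditionally independent given V), then σ(P*) ⊆ σ(V) and there exists a measurable function g with P* = g(V) almost surely; that is, the optimal private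 embedding is almost surely a measurable function of the layer-specific latent factor alone. -/
/-!
STATEMENT 11: Let L, Z be random variables with values in finite sets and set
P* = f_P(Z). (i) If H(L|P*) = H(L|Z) then I(L;Z|P*) = 0 and L, Z are
conditionally independent given P*, so P* is a sufficient statistic for L with
respect to Z. (ii) If in addition P* is minimal sufficient (σ(P*) is contained
in any other sufficient σ-algebra) and V is a random variable into a standard
Borel space with σ(V) sufficient for L, then σ(P*) ⊆ σ(V) and there is a
measurable g with P* = g(V) almost surely.
-/

open MeasureTheory
open scoped BigOperators Classical

noncomputable section

/-- Conditional entropy `H(L|A)` of the first variable given the second,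
computed from a joint pmf `p : K → A → ℝ` (terms with `p(ℓ,a) = 0` vanish). -/
def condEnt {K A : Type*} [Fintype K] [Fintype A] (p : K → A → ℝ) : ℝ :=
  -∑ ℓ, ∑ a, p ℓ a * Real.log (p ℓ a / ∑ ℓ', p ℓ' a)

/-- Joint pmf of `(L, P)` where `P = f(Z)`, obtained by pushing the joint pmf of
`(L, Z)` forward along `f`. -/
def jointLP {K S T : Type*} [Fintype K] [Fintype S] [Fintype T]
    (p : K → S → ℝ) (f : S → T) (ℓ : K) (t : T) : ℝ :=
  ∑ z, if f z = t then p ℓ z else 0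

/-- Joint pmf of `(L, (Z, P))` where `P = f(Z)`. -/
def jointLZP {K S T : Type*} [Fintype K] [Fintype S] [Fintype T]
    (p : K → S → ℝ) (f : S → T) (ℓ : K) (zt : S × T) : ℝ :=
  if f zt.1 = zt.2 then p ℓ zt.1 else 0

/-- Conditional mutual information `I(L;Z|P) = H(L|P) − H(L|(Z,P))`
for `P = f(Z)`. -/
def condMI {K S T : Type*} [Fintype K] [Fintype S] [Fintype T]
    (p : K → S → ℝ) (f : S → T) : ℝ :=
  condEnt (jointLP p f) - condEnt (jointLZP p f)

/-- `f(Z)` is a sufficient statistic for `L` with respect to `Z` at pmf level: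
`p(ℓ|z) = p(ℓ|f(z))` for every `z` with `p(z) > 0` (conditional independence of
`L` and `Z` given `f(Z)`). -/
def IsSufficient {K S T : Type*} [Fintype K] [Fintype S] [Fintype T]
    (p : K → S → ℝ) (f : S → T) : Prop :=
  ∀ (ℓ : K) (z : S), 0 < (∑ ℓ', p ℓ' z) →
    p ℓ z / (∑ ℓ', p ℓ' z)
      = jointLP p f ℓ (f z) / (∑ ℓ', jointLP p f ℓ' (f z))

/-- Joint pmf of the pair `(L, Z)` of random variables. -/
def jointPMF {Ω K S : Type*} [MeasurableSpace Ω] (μ : Measure Ω)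
    (L : Ω → K) (Z : Ω → S) (ℓ : K) (z : S) : ℝ :=
  (μ (L ⁻¹' {ℓ} ∩ Z ⁻¹' {z})).toReal

/-- A σ-algebra `m` is sufficient for `L` with respect to `Z` if `L` and `Z`
are conditionally independent given `m`. -/
def SuffAlg {Ω K S : Type*} [MeasurableSpace Ω] (μ : Measure Ω)
    (L : Ω → K) (Z : Ω → S) (m : MeasurableSpace Ω) : Prop :=
  ∀ (ℓ : K) (z : S),
    (μ[Set.indicator (L ⁻¹' {ℓ} ∩ Z ⁻¹' {z}) (fun _ => (1 : ℝ)) | m])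
      =ᵐ[μ] fun ω =>
        (μ[Set.indicator (L ⁻¹' {ℓ}) (fun _ => (1 : ℝ)) | m]) ω *
        (μ[Set.indicator (Z ⁻¹' {z}) (fun _ => (1 : ℝ)) | m]) ω

/-!
Since `f(Z)` is a function of `Z`, `H(L | (Z, f(Z))) = H(L | Z)`, so `I(L; Z | f(Z))` is the gap
`H(L | f(Z)) − H(L | Z) = ∑_z p(z) · KL(p(· | z) ‖ p(· | f z))`. By Gibbs' inequality this gap is
nonnegative and vanishes only if `p(ℓ | z) = p(ℓ | f z)` whenever `p(z) > 0`. Conditioning on the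
finite σ-algebra `σ(f(Z))` is averaging over the fibres of `f ∘ Z`, and `{Z = z}` lies in the fibre
of `f z`, so this identity is exactly the conditional independence of `L` and `Z` given `f(Z)`.
For (ii), minimality gives `σ(P*) ⊆ σ(V)`, and the Doob–Dynkin lemma factors `P*` through `V`
because `P*` takes values in a finite, hence standard Borel, space.
-/

open Real InformationTheory

section Gibbs

variable {K : Type*} [Fintype K]

lemma mul_log_sub_log_eq_klFun {u v : ℝ} (h : v = 0 → u = 0) :
    u * (log u - log v) = v * klFun (u / v) + (u - v) := by
  rcases eq_or_ne u 0 with rfl | hu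
  · simp [klFun_zero]
  · have hv : v ≠ 0 := fun hv => hu (h hv)
    rw [klFun_apply, log_div hu hv]
    field_simp
    ring

/-- `(∑ a) · KL(a / ∑ a ‖ b / ∑ b)` for unnormalized weights `a`, `b`. -/
def weightedKL (a b : K → ℝ) : ℝ :=
  ∑ ℓ, a ℓ * (log (a ℓ / ∑ j, a j) - log (b ℓ / ∑ j, b j))

variable {a b : K → ℝ}

lemma weightedKL_eq_mul_sum_klFun (hA : ∑ j, a j ≠ 0) (hB : ∑ j, b j ≠ 0)
    (hab : ∀ ℓ, b ℓ = 0 → a ℓ = 0) :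
    weightedKL a b = (∑ j, a j) *
      ∑ ℓ, (b ℓ / ∑ j, b j) * klFun ((a ℓ / ∑ j, a j) / (b ℓ / ∑ j, b j)) := by
  have hterm : ∀ ℓ, a ℓ * (log (a ℓ / ∑ j, a j) - log (b ℓ / ∑ j, b j))
      = (∑ j, a j) * ((b ℓ / ∑ j, b j) * klFun ((a ℓ / ∑ j, a j) / (b ℓ / ∑ j, b j))
          + ((a ℓ / ∑ j, a j) - b ℓ / ∑ j, b j)) := by
    intro ℓ
    rw [← mul_log_sub_log_eq_klFun, ← mul_assoc, mul_div_cancel₀ _ hA]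
    simp only [div_eq_zero_iff, hB, or_false]
    exact fun hb => Or.inl (hab ℓ hb)
  simp only [weightedKL, hterm, ← Finset.mul_sum, Finset.sum_add_distrib,
    Finset.sum_sub_distrib, ← Finset.sum_div, div_self hA, div_self hB, sub_self, add_zero]

lemma weightedKL_nonneg (ha : 0 ≤ a) (hab : a ≤ b) : 0 ≤ weightedKL a b := by
  rcases (Finset.sum_nonneg fun j (_ : j ∈ Finset.univ) => ha j).eq_or_lt with hA | hA
  · have ha0 := (Finset.sum_eq_zero_iff_of_nonneg fun j _ => ha j).mp hA.symm
    simp [weightedKL, ha0 _ (Finset.mem_univ _)]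
  · have hb : 0 ≤ b := ha.trans hab
    have hB : 0 < ∑ j, b j := hA.trans_le (Finset.sum_le_sum fun j _ => hab j)
    rw [weightedKL_eq_mul_sum_klFun hA.ne' hB.ne' fun ℓ hb => le_antisymm (hb ▸ hab ℓ) (ha ℓ)]
    exact mul_nonneg hA.le (Finset.sum_nonneg fun ℓ _ => mul_nonneg (div_nonneg (hb ℓ) hB.le)
      (klFun_nonneg (div_nonneg (div_nonneg (ha ℓ) hA.le) (div_nonneg (hb ℓ) hB.le))))

lemma div_sum_eq_of_weightedKL_eq_zero (ha : 0 ≤ a) (hab : a ≤ b) (hA : 0 < ∑ j, a j)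
    (h : weightedKL a b = 0) (ℓ : K) : a ℓ / ∑ j, a j = b ℓ / ∑ j, b j := by
  have hb : 0 ≤ b := ha.trans hab
  have hB : 0 < ∑ j, b j := hA.trans_le (Finset.sum_le_sum fun j _ => hab j)
  have hab0 : ∀ ℓ, b ℓ = 0 → a ℓ = 0 := fun ℓ hb => le_antisymm (hb ▸ hab ℓ) (ha ℓ)
  rw [weightedKL_eq_mul_sum_klFun hA.ne' hB.ne' hab0, mul_eq_zero, or_iff_right hA.ne',
    Finset.sum_eq_zero_iff_of_nonneg fun ℓ _ => mul_nonneg (div_nonneg (hb ℓ) hB.le)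
      (klFun_nonneg (div_nonneg (div_nonneg (ha ℓ) hA.le) (div_nonneg (hb ℓ) hB.le)))] at h
  rcases eq_or_ne (b ℓ / ∑ j, b j) 0 with hv | hv
  · rw [hv, div_eq_zero_iff.mpr (Or.inl (hab0 ℓ ((div_eq_zero_iff.mp hv).resolve_right hB.ne')))]
  · have hkl := (mul_eq_zero.mp (h ℓ (Finset.mem_univ ℓ))).resolve_left hv
    rwa [klFun_eq_zero_iff (div_nonneg (div_nonneg (ha ℓ) hA.le) (div_nonneg (hb ℓ) hB.le)),
      div_eq_one_iff_eq hv] at hkl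

end Gibbs

section Pmf

variable {K S T : Type*} [Fintype K] [Fintype S] [Fintype T] (p : K → S → ℝ) (f : S → T)

lemma sum_jointLP_mul (ℓ : K) (g : T → ℝ) :
    ∑ t, jointLP p f ℓ t * g t = ∑ z, p ℓ z * g (f z) := by
  simp only [jointLP, Finset.sum_mul, ite_mul, zero_mul]
  rw [Finset.sum_comm]
  simp

lemma condEnt_jointLP : condEnt (jointLP p f)
    = -∑ ℓ, ∑ z, p ℓ z * log (jointLP p f ℓ (f z) / ∑ ℓ', jointLP p f ℓ' (f z)) := by
  simp only [condEnt, sum_jointLP_mul]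

lemma condEnt_jointLZP : condEnt (jointLZP p f) = condEnt p := by
  simp [condEnt, jointLZP, Fintype.sum_prod_type, Finset.sum_ite_irrel, apply_ite]

lemma le_jointLP {p : K → S → ℝ} (hp : ∀ ℓ z, 0 ≤ p ℓ z) (ℓ : K) (z : S) :
    p ℓ z ≤ jointLP p f ℓ (f z) := by
  unfold jointLP
  simpa using Finset.single_le_sum (f := fun z' => if f z' = f z then p ℓ z' else 0)
    (fun z' _ => by split_ifs <;> simp [hp]) (Finset.mem_univ z)

lemma condEnt_jointLP_sub_condEnt : condEnt (jointLP p f) - condEnt p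
    = ∑ z, weightedKL (fun ℓ => p ℓ z) (fun ℓ => jointLP p f ℓ (f z)) := by
  rw [condEnt_jointLP]
  simp only [condEnt, weightedKL, mul_sub, Finset.sum_sub_distrib]
  rw [Finset.sum_comm (γ := S), Finset.sum_comm (γ := S)]
  ring

variable {p} in
lemma isSufficient_of_condEnt_jointLP_eq (hp : ∀ ℓ z, 0 ≤ p ℓ z)
    (hopt : condEnt (jointLP p f) = condEnt p) : IsSufficient p f := by
  intro ℓ z hz
  have hKL := (Finset.sum_eq_zero_iff_of_nonneg fun z _ =>
      weightedKL_nonneg (fun ℓ => hp ℓ z) (fun ℓ => le_jointLP f hp ℓ z)).mp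
    (by rw [← condEnt_jointLP_sub_condEnt, hopt, sub_self])
  exact div_sum_eq_of_weightedKL_eq_zero (fun ℓ => hp ℓ z) (fun ℓ => le_jointLP f hp ℓ z) hz
    (hKL z (Finset.mem_univ z)) ℓ

end Pmf

section FiniteFibers

variable {Ω T E : Type*} [MeasurableSpace Ω] {μ : Measure Ω}
  [MeasurableSpace T] [MeasurableSingletonClass T] {P : Ω → T}
  [NormedAddCommGroup E] [NormedSpace ℝ E] {f : Ω → E}

lemma setIntegral_preimage_eq_sum (hP : Measurable P) (hf : Integrable f μ) (s : Finset T) :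
    ∫ x in P ⁻¹' s, f x ∂μ = ∑ t ∈ s, ∫ x in P ⁻¹' {t}, f x ∂μ := by
  rw [← integral_biUnion_finset s (fun t _ => hP (measurableSet_singleton t))
    ((Set.pairwiseDisjoint_fiber P _).subset (Set.subset_univ _)) fun t _ => hf.integrableOn]
  simp only [← Finset.mem_coe, Set.biUnion_preimage_singleton]

variable [IsFiniteMeasure μ]

lemma condExp_comap_ae_eq_setAverage [CompleteSpace E] [Finite T] (hP : Measurable P)
    (hf : Integrable f μ) :
    μ[f | MeasurableSpace.comap P inferInstance]
      =ᵐ[μ] fun ω => ⨍ x in P ⁻¹' {P ω}, f x ∂μ := by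
  set c : T → E := fun t => ⨍ x in P ⁻¹' {t}, f x ∂μ
  have hc : Integrable (c ∘ P) μ := Integrable.of_finite.comp_measurable hP
  refine (ae_eq_condExp_of_forall_setIntegral_eq hP.comap_le hf
    (fun _ _ _ => hc.integrableOn) ?_ ?_).symm
  · rintro _ ⟨B, -, rfl⟩ -
    rw [← B.toFinite.coe_toFinset, setIntegral_preimage_eq_sum hP hc,
      setIntegral_preimage_eq_sum hP hf]
    refine Finset.sum_congr rfl fun t _ => ?_
    rw [setIntegral_congr_fun (g := fun _ => c t) (hP (measurableSet_singleton t))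
      fun x (hx : P x = t) => by simp only [Function.comp_apply, hx],
      setIntegral_const, measure_smul_setAverage _ (measure_ne_top _ _)]
  · exact (StronglyMeasurable.of_discrete.comp_measurable (comap_measurable P)).aestronglyMeasurable

lemma condExp_indicator_comap_ae_eq [Finite T] (hP : Measurable P) {A : Set Ω}
    (hA : MeasurableSet A) :
    μ[A.indicator (fun _ => (1 : ℝ)) | MeasurableSpace.comap P inferInstance]
      =ᵐ[μ] fun ω => μ.real (A ∩ P ⁻¹' {P ω}) / μ.real (P ⁻¹' {P ω}) := by
  filter_upwards [condExp_comap_ae_eq_setAverage hP ((integrable_const (1 : ℝ)).indicator hA)]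
    with ω hω
  rw [hω, setAverage_eq, setIntegral_indicator hA, setIntegral_const, smul_eq_mul, smul_eq_mul,
    mul_one, Set.inter_comm, inv_mul_eq_div]

lemma sum_measureReal_preimage_singleton_inter (hP : Measurable P) (s : Finset T) (A : Set Ω) :
    ∑ t ∈ s, μ.real (P ⁻¹' {t} ∩ A) = μ.real (P ⁻¹' s ∩ A) := by
  simp_rw [← measureReal_restrict_apply (hP (measurableSet_singleton _)),
    ← measureReal_restrict_apply (hP s.measurableSet)]
  exact sum_measureReal_preimage_singleton s fun t _ => hP (measurableSet_singleton t)

end FiniteFibers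

section JointPMF

variable {Ω K S T : Type*} [MeasurableSpace Ω] {μ : Measure Ω} [IsFiniteMeasure μ]
  [Fintype K] {L : Ω → K} {Z : Ω → S}

lemma sum_jointPMF [MeasurableSpace K] [MeasurableSingletonClass K] (hL : Measurable L)
    (z : S) : ∑ ℓ, jointPMF μ L Z ℓ z = μ.real (Z ⁻¹' {z}) := by
  simpa [jointPMF, measureReal_def] using
    sum_measureReal_preimage_singleton_inter (μ := μ) hL Finset.univ (Z ⁻¹' {z})

variable [Fintype S] [Fintype T]

lemma jointLP_jointPMF [MeasurableSpace S] [MeasurableSingletonClass S] (hZ : Measurable Z)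
    (f : S → T) :
    jointLP (jointPMF μ L Z) f = jointPMF μ L (f ∘ Z) := by
  ext ℓ t
  have hfiber : Z ⁻¹' ↑(Finset.univ.filter (f · = t)) = (f ∘ Z) ⁻¹' {t} := by ext; simp
  rw [jointLP, ← Finset.sum_filter, jointPMF, ← measureReal_def, Set.inter_comm, ← hfiber,
    ← sum_measureReal_preimage_singleton_inter hZ]
  simp only [jointPMF, measureReal_def, Set.inter_comm]

variable [MeasurableSpace K] [MeasurableSingletonClass K] [MeasurableSpace S]
  [MeasurableSingletonClass S] {f : S → T}

lemma IsSufficient.measureReal_inter_mul (hL : Measurable L) (hZ : Measurable Z)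
    (h : IsSufficient (jointPMF μ L Z) f) (ℓ : K) (z : S) :
    μ.real (L ⁻¹' {ℓ} ∩ Z ⁻¹' {z}) * μ.real ((f ∘ Z) ⁻¹' {f z})
      = μ.real (L ⁻¹' {ℓ} ∩ (f ∘ Z) ⁻¹' {f z}) * μ.real (Z ⁻¹' {z}) := by
  rcases (measureReal_nonneg (μ := μ) (s := Z ⁻¹' {z})).eq_or_lt with hz | hz
  · have hℓz : μ.real (L ⁻¹' {ℓ} ∩ Z ⁻¹' {z}) = 0 :=
      le_antisymm (hz ▸ measureReal_mono Set.inter_subset_right) measureReal_nonneg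
    rw [← hz, hℓz, zero_mul, mul_zero]
  · have hsub : Z ⁻¹' {z} ⊆ (f ∘ Z) ⁻¹' {f z} := fun ω hω => by simp_all
    have := h ℓ z (by rwa [sum_jointPMF hL])
    rwa [jointLP_jointPMF hZ, sum_jointPMF hL, sum_jointPMF hL,
      div_eq_div_iff hz.ne' (hz.trans_le (measureReal_mono hsub)).ne'] at this

lemma IsSufficient.condProb_fiber_inter_eq_mul (hL : Measurable L) (hZ : Measurable Z)
    (h : IsSufficient (jointPMF μ L Z) f) (ℓ : K) (z : S) (t : T) :
    μ.real (L ⁻¹' {ℓ} ∩ Z ⁻¹' {z} ∩ (f ∘ Z) ⁻¹' {t}) / μ.real ((f ∘ Z) ⁻¹' {t})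
      = μ.real (L ⁻¹' {ℓ} ∩ (f ∘ Z) ⁻¹' {t}) / μ.real ((f ∘ Z) ⁻¹' {t})
        * (μ.real (Z ⁻¹' {z} ∩ (f ∘ Z) ⁻¹' {t}) / μ.real ((f ∘ Z) ⁻¹' {t})) := by
  by_cases hzt : f z = t
  · subst hzt
    have hsub : Z ⁻¹' {z} ⊆ (f ∘ Z) ⁻¹' {f z} := fun ω hω => by simp_all
    rw [Set.inter_eq_left.mpr (Set.inter_subset_right.trans hsub), Set.inter_eq_left.mpr hsub]
    rcases eq_or_ne (μ.real ((f ∘ Z) ⁻¹' {f z})) 0 with h0 | h0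
    · simp [h0]
    · rw [div_mul_div_comm, eq_div_iff (mul_ne_zero h0 h0), ← mul_assoc, div_mul_cancel₀ _ h0,
        h.measureReal_inter_mul hL hZ]
  · have hdisj : Z ⁻¹' {z} ∩ (f ∘ Z) ⁻¹' {t} = ∅ :=
      Set.eq_empty_of_forall_notMem fun ω ⟨hz, ht⟩ => hzt (by simp_all)
    simp [Set.inter_assoc, hdisj]

lemma IsSufficient.suffAlg_comap [MeasurableSpace T] [MeasurableSingletonClass T]
    (hL : Measurable L) (hZ : Measurable Z) (h : IsSufficient (jointPMF μ L Z) f) :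
    SuffAlg μ L Z (MeasurableSpace.comap (f ∘ Z) inferInstance) := by
  have hP : Measurable (f ∘ Z) := (measurable_of_countable f).comp hZ
  intro ℓ z
  have hℓ := hL (measurableSet_singleton ℓ)
  have hz := hZ (measurableSet_singleton z)
  filter_upwards [condExp_indicator_comap_ae_eq (μ := μ) hP (hℓ.inter hz),
    condExp_indicator_comap_ae_eq (μ := μ) hP hℓ, condExp_indicator_comap_ae_eq (μ := μ) hP hz]
    with ω h₁ h₂ h₃
  rw [h₁, h₂, h₃]
  exact h.condProb_fiber_inter_eq_mul hL hZ ℓ z _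

end JointPMF

theorem stmt11_general {Ω : Type*} [mΩ : MeasurableSpace Ω] (μ : Measure Ω)
    [IsProbabilityMeasure μ]
    {K S T 𝒱 : Type*} [Fintype K] [Fintype S] [Fintype T] [Nonempty T]
    [MeasurableSpace K] [MeasurableSingletonClass K]
    [MeasurableSpace S] [MeasurableSingletonClass S]
    [MeasurableSpace T] [MeasurableSingletonClass T]
    [MeasurableSpace 𝒱]
    (L : Ω → K) (Z : Ω → S) (hL : Measurable L) (hZ : Measurable Z)
    (fP : S → T)
    (hopt : condEnt (jointLP (jointPMF μ L Z) fP) = condEnt (jointPMF μ L Z)) :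
    -- (i)
    condMI (jointPMF μ L Z) fP = 0
    ∧ IsSufficient (jointPMF μ L Z) fP
    ∧ SuffAlg μ L Z (MeasurableSpace.comap (fun ω => fP (Z ω)) inferInstance)
    -- (ii)
    ∧ ∀ V : Ω → 𝒱, Measurable V →
        SuffAlg μ L Z (MeasurableSpace.comap V inferInstance) →
        (∀ m : MeasurableSpace Ω, m ≤ mΩ → @SuffAlg Ω K S mΩ μ L Z m →
          MeasurableSpace.comap (fun ω => fP (Z ω)) inferInstance ≤ m) →
        MeasurableSpace.comap (fun ω => fP (Z ω)) inferInstance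
            ≤ MeasurableSpace.comap V inferInstance
        ∧ ∃ g : 𝒱 → T, Measurable g ∧
            (fun ω => fP (Z ω)) =ᵐ[μ] fun ω => g (V ω) := by
  have hsuff : IsSufficient (jointPMF μ L Z) fP :=
    isSufficient_of_condEnt_jointLP_eq fP (fun _ _ => measureReal_nonneg) hopt
  refine ⟨by rw [condMI, condEnt_jointLZP, hopt, sub_self], hsuff, hsuff.suffAlg_comap hL hZ, ?_⟩
  intro V hV hVsuff hmin
  have hle := hmin _ hV.comap_le hVsuff
  obtain ⟨g, hg, hgV⟩ := (Measurable.of_comap_le hle).exists_eq_measurable_comp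
  exact ⟨hle, g, hg, hgV.eventuallyEq⟩

/-- (i) If the encoder attains `H(L|f_P(Z)) = H(L|Z)`, then `I(L;Z|f_P(Z)) = 0`
and `L`, `Z` are conditionally independent given `P* = f_P(Z)`, so `P*` is a
sufficient statistic for `L` with respect to `Z` (both at pmf level and as a
sufficient σ-algebra). (ii) If moreover `P*` is minimal sufficient and `V` is a
random variable into a standard Borel space with `σ(V)` sufficient, then
`σ(P*) ⊆ σ(V)` and `P* = g(V)` almost surely for some measurable `g`. -/
theorem stmt11 {Ω : Type*} [mΩ : MeasurableSpace Ω] (μ : Measure Ω)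
    [IsProbabilityMeasure μ]
    {K S T 𝒱 : Type*} [Fintype K] [Fintype S] [Fintype T] [Nonempty T]
    [MeasurableSpace K] [MeasurableSingletonClass K]
    [MeasurableSpace S] [MeasurableSingletonClass S]
    [MeasurableSpace T] [MeasurableSingletonClass T]
    [MeasurableSpace 𝒱] [StandardBorelSpace 𝒱]
    (L : Ω → K) (Z : Ω → S) (hL : Measurable L) (hZ : Measurable Z)
    (fP : S → T)
    (hopt : condEnt (jointLP (jointPMF μ L Z) fP) = condEnt (jointPMF μ L Z)) :
    -- (i)
    condMI (jointPMF μ L Z) fP = 0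
    ∧ IsSufficient (jointPMF μ L Z) fP
    ∧ SuffAlg μ L Z (MeasurableSpace.comap (fun ω => fP (Z ω)) inferInstance)
    -- (ii)
    ∧ ∀ V : Ω → 𝒱, Measurable V →
        SuffAlg μ L Z (MeasurableSpace.comap V inferInstance) →
        (∀ m : MeasurableSpace Ω, m ≤ mΩ → @SuffAlg Ω K S mΩ μ L Z m →
          MeasurableSpace.comap (fun ω => fP (Z ω)) inferInstance ≤ m) →
        MeasurableSpace.comap (fun ω => fP (Z ω)) inferInstance
            ≤ MeasurableSpace.comap V inferInstance
        ∧ ∃ g : 𝒱 → T, Measurable g ∧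
            (fun ω => fP (Z ω)) =ᵐ[μ] fun ω => g (V ω) :=
  stmt11_general (mΩ := mΩ) μ L Z hL hZ fP hopt
end
end
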